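/- arXiv:2002.07556 — 7 statements merged into one kernel-verified Lean document; each statement's English description precedes it below -/
import Mathlib

section
/- Let D be a Dedekind domain, and for a nonzero x in D let V(x) denote the (finite) set of maximal ideals containing x. Let 𝒱(D) = {V(x) : x ∈ D, x ≠ 0}, a sub-semilattice of the finite subsets of Max(D) under union. Then for X, Y ∈ 𝒱(D), X divides Y in (𝒱(D), ∪) (i.e., there is Z ∈ 𝒱(D) with Y = X ∪ Z) if and only if X ⊆ Y. -/
/-- The set of maximal ideals containing a nonzero element `x`. -/
def Vset (D : Type*) [CommRing D] (x : D) : Set (Ideal D) :=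
  {P : Ideal D | P.IsMaximal ∧ x ∈ P}

/-- `𝒱(D) = {V(x) : x ∈ D, x ≠ 0}`. -/
def VV (D : Type*) [CommRing D] : Set (Set (Ideal D)) :=
  {S | ∃ x : D, x ≠ 0 ∧ S = Vset D x}

/-- For `X, Y ∈ 𝒱(D)`, `X` divides `Y` in the semigroup `(𝒱(D), ∪)` if and only if `X ⊆ Y`. -/
theorem VV_dvd_iff_subset {D : Type*} [CommRing D] [IsDomain D] [IsDedekindDomain D]
    (X Y : Set (Ideal D)) (hX : X ∈ VV D) (hY : Y ∈ VV D) :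
    (∃ Z ∈ VV D, Y = X ∪ Z) ↔ X ⊆ Y := by
  constructor
  · rintro ⟨Z, _, rfl⟩
    exact Set.subset_union_left
  · intro h
    exact ⟨Y, hY, (Set.union_eq_self_of_subset_left h).symm⟩
end

section
/- Let D be a Dedekind domain and a₁,…,a_n nonzero elements. Then a₁,…,a_n are coprime (i.e., no maximal ideal contains all of them) if and only if the sets V(a₁),…,V(a_n) are product-coprime in the semigroup 𝒱(D) = ({V(x) : x ∈ D∖{0}}, ∪); here elements m₁,…,m_n of a commutative semigroup M are product-coprime if whenever x = m₁b₁ = ⋯ = m_nb_n for some x, b₁,…,b_n ∈ M, then for every j, m_j divides the product of the b_i with i ≠ j. -/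
/-- `m₁, …, m_n` (elements of `𝒱(D)`) are product-coprime in the semigroup `(𝒱(D), ∪)`:
whenever `x = m₁ ∪ b₁ = ⋯ = m_n ∪ b_n` with `x, bᵢ ∈ 𝒱(D)`, each `m_j` divides
`⋃_{i ≠ j} b_i` in `𝒱(D)`. -/
def ProdCoprime (D : Type*) [CommRing D] {n : ℕ} (m : Fin n → Set (Ideal D)) : Prop :=
  ∀ (x : Set (Ideal D)) (b : Fin n → Set (Ideal D)),
    x ∈ VV D → (∀ i, b i ∈ VV D) → (∀ i, x = m i ∪ b i) →
    ∀ j, ∃ Z ∈ VV D, (⋃ i ∈ ({i | i ≠ j} : Set (Fin n)), b i) = m j ∪ Z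

lemma Vset_one (D : Type*) [CommRing D] : Vset D 1 = ∅ := by
  ext P
  simp only [Vset, Set.mem_setOf_eq, Set.mem_empty_iff_false, iff_false]
  rintro ⟨hP, h1⟩
  exact hP.ne_top ((Ideal.eq_top_iff_one P).mpr h1)

lemma Vset_mul {D : Type*} [CommRing D] (x y : D) :
    Vset D (x * y) = Vset D x ∪ Vset D y := by
  ext P
  simp only [Vset, Set.mem_setOf_eq, Set.mem_union]
  constructor
  · rintro ⟨hP, hxy⟩
    rcases hP.isPrime.mem_or_mem hxy with h | h
    · exact Or.inl ⟨hP, h⟩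
    · exact Or.inr ⟨hP, h⟩
  · rintro (⟨hP, h⟩ | ⟨hP, h⟩)
    · exact ⟨hP, Ideal.mul_mem_right _ _ h⟩
    · exact ⟨hP, Ideal.mul_mem_left _ _ h⟩

lemma Vset_prod {D : Type*} [CommRing D] {ι : Type*} (s : Finset ι) (f : ι → D) :
    Vset D (∏ i ∈ s, f i) = ⋃ i ∈ s, Vset D (f i) := by
  classical
  induction s using Finset.induction with
  | empty => simp [Vset_one]
  | @insert a s h ih =>
      rw [Finset.prod_insert h, Vset_mul, ih]
      simp

lemma Vset_finite {D : Type*} [CommRing D] [IsDomain D] [IsDedekindDomain D] {x : D}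
    (hx : x ≠ 0) : (Vset D x).Finite := by
  have hI : Ideal.span {x} ≠ (0 : Ideal D) := by
    simpa [Ideal.span_singleton_eq_bot] using hx
  have h := Ideal.finite_factors hI
  have hsub : Vset D x ⊆
      (fun v : IsDedekindDomain.HeightOneSpectrum D => v.asIdeal) ''
        {v | v.asIdeal ∣ Ideal.span {x}} := by
    rintro P ⟨hP, hxP⟩
    have hPbot : P ≠ ⊥ := by
      rintro rfl
      exact hx (by simpa using hxP)
    refine ⟨⟨P, hP.isPrime, hPbot⟩, ?_, rfl⟩
    exact Ideal.dvd_iff_le.mpr (by rwa [Ideal.span_le, Set.singleton_subset_iff])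
  exact ((h.image _).subset hsub)

/-- Nonzero elements `a₁, …, a_n` of a Dedekind domain are coprime (no maximal ideal contains
all of them) if and only if `V(a₁), …, V(a_n)` are product-coprime in `𝒱(D)`. -/
theorem coprime_iff_prodCoprime {D : Type*} [CommRing D] [IsDomain D] [IsDedekindDomain D]
    {n : ℕ} (hn : 0 < n) (a : Fin n → D) (ha : ∀ i, a i ≠ 0) :
    (¬ ∃ P : Ideal D, P.IsMaximal ∧ ∀ i, a i ∈ P) ↔
      ProdCoprime D (fun i => Vset D (a i)) := by
  constructor
  · -- forward direction
    intro hcop x b hx hb hxb j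
    choose c hc0 hbc using hb
    refine ⟨⋃ i ∈ ({i | i ≠ j} : Set (Fin n)), b i, ?_, ?_⟩
    · refine ⟨∏ i ∈ Finset.univ.erase j, c i,
        Finset.prod_ne_zero_iff.mpr (fun i _ => hc0 i), ?_⟩
      rw [Vset_prod]
      ext P
      simp only [Set.mem_iUnion, Finset.mem_erase, Finset.mem_univ, and_true,
        Set.mem_setOf_eq]
      constructor
      · rintro ⟨i, hi, hP⟩
        exact ⟨i, hi, by rwa [← hbc i]⟩
      · rintro ⟨i, hi, hP⟩
        exact ⟨i, hi, by rwa [hbc i]⟩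
    · have hsub : Vset D (a j) ⊆ ⋃ i ∈ ({i | i ≠ j} : Set (Fin n)), b i := by
        rintro P ⟨hPmax, hPaj⟩
        have : ¬ ∀ i, a i ∈ P := fun hall => hcop ⟨P, hPmax, hall⟩
        push_neg at this
        obtain ⟨i, hai⟩ := this
        have hij : i ≠ j := by rintro rfl; exact hai hPaj
        have hPx : P ∈ x := by
          rw [hxb j]; exact Or.inl ⟨hPmax, hPaj⟩
        have hPbi : P ∈ b i := by
          have := hxb i
          rw [this] at hPx
          rcases hPx with h | h
          · exact absurd h.2 hai
          · exact h
        exact Set.mem_biUnion hij hPbi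
      exact (Set.union_eq_self_of_subset_left hsub).symm
  · -- backward direction
    intro h
    rintro ⟨P, hPmax, hPa⟩
    -- the finite set of maximal ideals containing some product ∏ aᵢ, minus P
    have hprod0 : (∏ i, a i) ≠ 0 := Finset.prod_ne_zero_iff.mpr fun i _ => ha i
    have hfin : (Vset D (∏ i, a i) \ {P}).Finite :=
      (Vset_finite hprod0).subset Set.diff_subset
    set Sf : Finset (Ideal D) := hfin.toFinset with hSf
    have hIP : ¬ (∏ Q ∈ Sf, Q) ≤ P := by
      rw [hPmax.isPrime.prod_le]
      rintro ⟨Q, hQ, hQP⟩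
      rw [hSf, Set.Finite.mem_toFinset] at hQ
      obtain ⟨⟨hQmax, -⟩, hQP'⟩ := hQ
      exact hQP' (hQmax.eq_of_le hPmax.ne_top hQP)
    obtain ⟨c, hcI, hcP⟩ := SetLike.not_le_iff_exists.mp hIP
    have hc0 : c ≠ 0 := fun hc => hcP (hc ▸ P.zero_mem)
    have hcQ : ∀ Q ∈ Vset D (∏ i, a i) \ {P}, c ∈ Q := by
      intro Q hQ
      have hle : (∏ Q ∈ Sf, Q) ≤ Q :=
        le_trans Ideal.prod_le_inf (Finset.inf_le (by rwa [hSf, Set.Finite.mem_toFinset]))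
      exact hle hcI
    -- the data violating ProdCoprime
    have hxb : ∀ i, Vset D ((∏ i, a i) * c) = Vset D (a i) ∪ Vset D c := by
      intro i
      rw [Vset_mul]
      ext Q
      simp only [Set.mem_union]
      constructor
      · rintro (hQ | hQ)
        · by_cases hQP : Q = P
          · exact Or.inl (hQP ▸ ⟨hPmax, hPa i⟩)
          · exact Or.inr ⟨hQ.1, hcQ Q ⟨hQ, hQP⟩⟩
        · exact Or.inr hQ
      · rintro (hQ | hQ)
        · refine Or.inl ⟨hQ.1, ?_⟩
          obtain ⟨t, ht⟩ := Finset.dvd_prod_of_mem a (Finset.mem_univ i)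
          rw [ht]
          exact Ideal.mul_mem_right _ _ hQ.2
        · exact Or.inr hQ
    obtain ⟨Z, hZ, hEq⟩ := h (Vset D ((∏ i, a i) * c)) (fun _ => Vset D c)
      ⟨_, mul_ne_zero hprod0 hc0, rfl⟩ (fun _ => ⟨c, hc0, rfl⟩) hxb ⟨0, hn⟩
    have hPmem : P ∈ Vset D (a ⟨0, hn⟩) ∪ Z := Or.inl ⟨hPmax, hPa _⟩
    rw [← hEq] at hPmem
    simp only [Set.mem_iUnion] at hPmem
    obtain ⟨i, -, hPc⟩ := hPmem
    exact hcP hPc.2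
end

section
/- Let D be a Dedekind domain. The map P ↦ {V(x) : x ∈ P, x ≠ 0} is a bijection from the set Max(D) of maximal ideals of D onto the set of maximal product-proper subsets of the semigroup 𝒱(D) = ({V(x) : x ∈ D∖{0}}, ∪), with inverse 𝒴 ↦ {x ∈ D : V(x) ∈ 𝒴}. -/
/-- `I ⊊ 𝒱(D)` is product-proper if no (nonempty) finite subset of `I` is product-coprime. -/
def ProductProper (D : Type*) [CommRing D] (I : Set (Set (Ideal D))) : Prop :=
  I ⊆ VV D ∧ I ≠ VV D ∧
    ∀ (n : ℕ) (m : Fin n → Set (Ideal D)), 0 < n → Function.Injective m →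
      (∀ i, m i ∈ I) → ¬ ProdCoprime D m

/-- A maximal product-proper subset of `𝒱(D)`. -/
def MaxProductProper (D : Type*) [CommRing D] (I : Set (Set (Ideal D))) : Prop :=
  ProductProper D I ∧ ∀ J : Set (Set (Ideal D)), ProductProper D J → I ⊆ J → J = I

/-- `ν(P) = {V(x) : x ∈ P, x ≠ 0}`. -/
def nu (D : Type*) [CommRing D] (P : Ideal D) : Set (Set (Ideal D)) :=
  {S | ∃ x : D, x ∈ P ∧ x ≠ 0 ∧ S = Vset D x}

section Aux

set_option linter.unusedSectionVars false

variable {D : Type*} [CommRing D] [IsDomain D] [IsDedekindDomain D]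

lemma vset_one : Vset D 1 = ∅ := by
  ext P
  simp only [Vset, Set.mem_setOf_eq, Set.mem_empty_iff_false, iff_false, not_and]
  intro hP h1
  exact hP.ne_top ((Ideal.eq_top_iff_one _).2 h1)

lemma empty_mem_VV : (∅ : Set (Ideal D)) ∈ VV D :=
  ⟨1, one_ne_zero, vset_one.symm⟩

lemma vset_mul (a b : D) : Vset D (a * b) = Vset D a ∪ Vset D b := by
  ext P
  constructor
  · rintro ⟨hm, hab⟩
    rcases hm.isPrime.mem_or_mem hab with h | h
    · exact Or.inl ⟨hm, h⟩
    · exact Or.inr ⟨hm, h⟩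
  · rintro (⟨hm, h⟩ | ⟨hm, h⟩)
    · exact ⟨hm, Ideal.mul_mem_right _ _ h⟩
    · exact ⟨hm, Ideal.mul_mem_left _ _ h⟩

lemma union_mem_VV {S T : Set (Ideal D)} (hS : S ∈ VV D) (hT : T ∈ VV D) :
    S ∪ T ∈ VV D := by
  obtain ⟨a, ha, rfl⟩ := hS
  obtain ⟨b, hb, rfl⟩ := hT
  exact ⟨a * b, mul_ne_zero ha hb, (vset_mul a b).symm⟩

lemma biUnion_mem_VV {ι : Type*} (s : Finset ι) (f : ι → Set (Ideal D))
    (hf : ∀ i ∈ s, f i ∈ VV D) : (⋃ i ∈ s, f i) ∈ VV D := by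
  classical
  revert hf
  refine Finset.induction_on s ?_ ?_
  · intro _
    simpa using (empty_mem_VV : (∅ : Set (Ideal D)) ∈ VV D)
  · intro a s _ ih hf
    rw [Finset.set_biUnion_insert]
    exact union_mem_VV (hf a (Finset.mem_insert_self a s))
      (ih fun i hi => hf i (Finset.mem_insert_of_mem hi))

lemma vset_finite {x : D} (hx : x ≠ 0) : (Vset D x).Finite := by
  have h0 : Ideal.span ({x} : Set D) ≠ 0 := by
    simpa [Ideal.span_singleton_eq_bot] using hx
  have hfin : {J : Ideal D | J ∣ Ideal.span {x}}.Finite :=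
    Set.finite_coe_iff.mp
      (@Finite.of_fintype _ (UniqueFactorizationMonoid.fintypeSubtypeDvd (Ideal.span ({x} : Set D)) h0))
  exact hfin.subset fun P hP => Ideal.dvd_span_singleton.2 hP.2

lemma mem_nu_iff {P : Ideal D} (hP : P.IsMaximal) {S : Set (Ideal D)} :
    S ∈ nu D P ↔ S ∈ VV D ∧ P ∈ S := by
  constructor
  · rintro ⟨x, hxP, hx0, rfl⟩
    exact ⟨⟨x, hx0, rfl⟩, hP, hxP⟩
  · rintro ⟨⟨x, hx0, rfl⟩, _, hxP⟩
    exact ⟨x, hxP, hx0, rfl⟩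

lemma empty_not_mem {J : Set (Set (Ideal D))} (hJ : ProductProper D J) :
    (∅ : Set (Ideal D)) ∉ J := by
  intro h
  refine hJ.2.2 1 (fun _ => ∅) one_pos (fun a b _ => Subsingleton.elim a b) (fun _ => h) ?_
  intro x b hx hb hxb j
  refine ⟨∅, empty_mem_VV, ?_⟩
  have hset : ({i | i ≠ j} : Set (Fin 1)) = ∅ := by
    ext i
    simp [Subsingleton.elim i j]
  rw [hset]
  simp

lemma finset_inter_nonempty {J : Set (Set (Ideal D))} (hJ : ProductProper D J)
    (T : Finset (Set (Ideal D))) (hne : T.Nonempty) (hsub : ↑T ⊆ J) :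
    (⋂₀ (T : Set (Set (Ideal D)))).Nonempty := by
  by_contra hemp
  rw [Set.not_nonempty_iff_eq_empty] at hemp
  set n := T.card with hn
  have hpos : 0 < n := Finset.card_pos.2 hne
  set e := T.equivFin with he
  set m : Fin n → Set (Ideal D) := fun i => (e.symm i : Set (Ideal D)) with hm
  have hinj : Function.Injective m := fun i j h => e.symm.injective (Subtype.ext h)
  have hmemT : ∀ i, m i ∈ T := fun i => (e.symm i).2
  refine hJ.2.2 n m hpos hinj (fun i => hsub (hmemT i)) ?_
  intro x b hx hb hxb j
  refine ⟨⋃ i ∈ ({i | i ≠ j} : Set (Fin n)), b i, ?_, ?_⟩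
  · classical
    have heq : (⋃ i ∈ ({i | i ≠ j} : Set (Fin n)), b i)
        = ⋃ i ∈ Finset.univ.filter (· ≠ j), b i := by
      ext Q
      simp
    rw [heq]
    exact biUnion_mem_VV _ _ (fun i _ => hb i)
  · refine (Set.union_eq_self_of_subset_left ?_).symm
    intro Q hQ
    obtain ⟨S, hST, hQS⟩ : ∃ S ∈ (T : Set (Set (Ideal D))), Q ∉ S := by
      by_contra hc
      push_neg at hc
      have : Q ∈ ⋂₀ (T : Set (Set (Ideal D))) := fun S hS => hc S hS
      rw [hemp] at this
      exact this
    set i := e ⟨S, hST⟩ with hi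
    have hmi : m i = S := by
      simp [hm, hi]
    have hij : i ≠ j := by
      intro h
      rw [h] at hmi
      exact hQS (hmi ▸ hQ)
    have hQx : Q ∈ x := by
      rw [hxb j]
      exact Or.inl hQ
    have hQmb : Q ∈ m i ∪ b i := by
      rw [← hxb i]
      exact hQx
    rcases hQmb with h | h
    · exact absurd (hmi ▸ h) hQS
    · exact Set.mem_biUnion hij h

lemma nu_productProper {P : Ideal D} (hP : P.IsMaximal) : ProductProper D (nu D P) := by
  refine ⟨?_, ?_, ?_⟩
  · rintro S ⟨x, _, hx0, rfl⟩
    exact ⟨x, hx0, rfl⟩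
  · intro h
    have hmem : (∅ : Set (Ideal D)) ∈ nu D P := h ▸ empty_mem_VV
    rw [mem_nu_iff hP] at hmem
    exact hmem.2
  · intro n m hpos hinj hmem hcop
    classical
    choose a haP ha0 hVa using hmem
    set A : D := ∏ i, a i with hA
    have hA0 : A ≠ 0 := Finset.prod_ne_zero_iff.2 fun i _ => ha0 i
    have hVA : Vset D A = ⋃ i, m i := by
      ext Q
      constructor
      · rintro ⟨hQ, hAQ⟩
        haveI := hQ.isPrime
        obtain ⟨i, _, hi⟩ := Ideal.IsPrime.prod_mem_iff.1 hAQ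
        exact Set.mem_iUnion.2 ⟨i, (hVa i) ▸ ⟨hQ, hi⟩⟩
      · intro hQ
        obtain ⟨i, hi⟩ := Set.mem_iUnion.1 hQ
        rw [hVa i] at hi
        haveI := hi.1.isPrime
        exact ⟨hi.1, Ideal.IsPrime.prod_mem_iff.2 ⟨i, Finset.mem_univ i, hi.2⟩⟩
    have hfinA : (Vset D A).Finite := vset_finite hA0
    have hfin : ((Vset D A) \ {P}).Finite := hfinA.diff
    have hchoice : ∀ Q ∈ (Vset D A) \ {P}, ∃ c, c ∈ Q ∧ c ∉ P := by
      rintro Q ⟨⟨hQmax, _⟩, hQP⟩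
      by_contra hc
      push_neg at hc
      have hle : Q ≤ P := fun y hy => hc y hy
      exact hQP (hQmax.eq_of_le hP.ne_top hle)
    choose! c hc1 hc2 using hchoice
    set F := hfin.toFinset with hF
    set C : D := ∏ Q ∈ F, c Q with hC
    have hCP : C ∉ P := by
      intro hmemC
      haveI := hP.isPrime
      obtain ⟨Q, hQF, hQ⟩ := Ideal.IsPrime.prod_mem_iff.1 hmemC
      exact hc2 Q (hfin.mem_toFinset.1 hQF) hQ
    have hC0 : C ≠ 0 := fun h => hCP (h ▸ P.zero_mem)
    have hCQ : ∀ Q ∈ (Vset D A) \ {P}, C ∈ Q := by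
      intro Q hQ
      obtain ⟨k, hk⟩ := Finset.dvd_prod_of_mem c (hfin.mem_toFinset.2 hQ)
      rw [hC, hk]
      exact Ideal.mul_mem_right _ _ (hc1 Q hQ)
    have hPmi : ∀ i, P ∈ m i := by
      intro i
      rw [hVa i]
      exact ⟨hP, haP i⟩
    set x : Set (Ideal D) := Vset D (A * C) with hx
    set b : Fin n → Set (Ideal D) := fun _ => Vset D C with hb
    have hxVV : x ∈ VV D := ⟨A * C, mul_ne_zero hA0 hC0, rfl⟩
    have hbVV : ∀ i, b i ∈ VV D := fun _ => ⟨C, hC0, rfl⟩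
    have hmisub : ∀ i, m i ⊆ Vset D A := by
      intro i Q hQ
      rw [hVA]
      exact Set.mem_iUnion.2 ⟨i, hQ⟩
    have hxb : ∀ i, x = m i ∪ b i := by
      intro i
      rw [hx, vset_mul]
      apply Set.Subset.antisymm
      · rintro Q (hQA | hQC)
        · by_cases hQP : Q = P
          · exact Or.inl (hQP ▸ hPmi i)
          · exact Or.inr ⟨hQA.1, hCQ Q ⟨hQA, hQP⟩⟩
        · exact Or.inr hQC
      · rintro Q (hQ | hQ)
        · exact Or.inl (hmisub i hQ)
        · exact Or.inr hQ
    obtain ⟨Z, hZ, hU⟩ := hcop x b hxVV hbVV hxb ⟨0, hpos⟩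
    have hPin : P ∈ m ⟨0, hpos⟩ ∪ Z := Or.inl (hPmi _)
    rw [← hU] at hPin
    obtain ⟨i, _, hPb⟩ := Set.mem_iUnion₂.1 hPin
    exact hCP hPb.2

lemma nu_max {P : Ideal D} (hP : P.IsMaximal) {J : Set (Set (Ideal D))}
    (hJ : ProductProper D J) (hsub : nu D P ⊆ J) : J = nu D P := by
  refine Set.Subset.antisymm ?_ hsub
  intro S hS
  obtain ⟨y, hy0, rfl⟩ := hJ.1 hS
  rw [mem_nu_iff hP]
  refine ⟨⟨y, hy0, rfl⟩, ?_⟩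
  by_contra hPS
  have hfin : (Vset D y).Finite := vset_finite hy0
  have hne : (Vset D y).Nonempty := by
    have h := finset_inter_nonempty hJ {Vset D y} ⟨_, Finset.mem_singleton_self _⟩
      (by simpa using hS)
    simpa using h
  classical
  set F := hfin.toFinset with hF
  have hnotsub : ¬ ((P : Set D) ⊆ ⋃ Q ∈ (↑F : Set (Ideal D)), (Q : Set D)) := by
    rw [Ideal.subset_union_prime ⊥ ⊥ (fun Q hQ _ _ => ((hfin.mem_toFinset.1 hQ).1).isPrime)]
    rintro ⟨Q, hQF, hle⟩
    have hQ := hfin.mem_toFinset.1 hQF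
    have hPQ : P = Q := hP.eq_of_le hQ.1.ne_top hle
    exact hPS (hPQ ▸ hQ)
  obtain ⟨z, hzP, hznot⟩ := Set.not_subset.1 hnotsub
  have hz : ∀ Q ∈ Vset D y, z ∉ Q := by
    intro Q hQ hzQ
    exact hznot (Set.mem_biUnion (Finset.mem_coe.2 (hfin.mem_toFinset.2 hQ)) hzQ)
  have hz0 : z ≠ 0 := by
    obtain ⟨Q0, hQ0⟩ := hne
    exact fun h => hz Q0 hQ0 (h ▸ Q0.zero_mem)
  have hVz : Vset D z ∈ J := hsub ⟨z, hzP, hz0, rfl⟩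
  have hinter := finset_inter_nonempty hJ {Vset D y, Vset D z}
    ⟨_, Finset.mem_insert_self _ _⟩ ?_
  · obtain ⟨Q, hQ⟩ := hinter
    have hQy : Q ∈ Vset D y := hQ _ (by simp)
    have hQz : Q ∈ Vset D z := hQ _ (by simp)
    exact hz Q hQy hQz.2
  · intro S hS'
    simp only [Finset.coe_insert, Finset.coe_singleton, Set.mem_insert_iff,
      Set.mem_singleton_iff] at hS'
    rcases hS' with rfl | rfl
    · exact hS
    · exact hVz

lemma nu_surj (𝒴 : Set (Set (Ideal D))) (h : MaxProductProper D 𝒴) :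
    ∃ P : Ideal D, P.IsMaximal ∧ nu D P = 𝒴 := by
  obtain ⟨hprop, hmax⟩ := h
  rcases Set.eq_empty_or_nonempty 𝒴 with h0 | ⟨S0, hS0⟩
  · obtain ⟨P, hP⟩ := Ideal.exists_maximal D
    exact ⟨P, hP, hmax _ (nu_productProper hP) (h0 ▸ Set.empty_subset _)⟩
  · obtain ⟨y0, hy00, rfl⟩ := hprop.1 hS0
    have hfin := vset_finite hy00
    have hexists : ∃ P, ∀ S ∈ 𝒴, P ∈ S := by
      by_contra hc
      push_neg at hc
      choose g hg1 hg2 using hc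
      classical
      set F := hfin.toFinset with hF
      have hinter := finset_inter_nonempty hprop (insert (Vset D y0) (F.image g))
        ⟨_, Finset.mem_insert_self _ _⟩ ?_
      · obtain ⟨Q, hQ⟩ := hinter
        have hQ1 : Q ∈ Vset D y0 := hQ _ (by simp)
        have hQ2 : Q ∈ g Q := by
          refine hQ _ ?_
          simp only [Finset.coe_insert, Set.mem_insert_iff, Finset.coe_image,
            Set.mem_image, Finset.mem_coe]
          exact Or.inr ⟨Q, hfin.mem_toFinset.2 hQ1, rfl⟩
        exact hg2 Q hQ2
      · intro S hS
        simp only [Finset.coe_insert, Set.mem_insert_iff, Finset.coe_image,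
          Set.mem_image, Finset.mem_coe] at hS
        rcases hS with rfl | ⟨Q, _, rfl⟩
        · exact hS0
        · exact hg1 Q
    obtain ⟨P, hPall⟩ := hexists
    have hPmax : P.IsMaximal := (hPall _ hS0).1
    refine ⟨P, hPmax, hmax _ (nu_productProper hPmax) ?_⟩
    intro S hS
    rw [mem_nu_iff hPmax]
    exact ⟨hprop.1 hS, hPall S hS⟩

end Aux

/-- The map `P ↦ ν(P) = {V(x) : x ∈ P, x ≠ 0}` is a bijection from the maximal ideals of a
Dedekind domain `D` onto the maximal product-proper subsets of `𝒱(D)`, with inverse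
`𝒴 ↦ {x ∈ D : V(x) ∈ 𝒴}` (together with `0`). -/
theorem nu_bijection {D : Type*} [CommRing D] [IsDomain D] [IsDedekindDomain D] :
    (∀ P : Ideal D, P.IsMaximal → MaxProductProper D (nu D P)) ∧
    (∀ 𝒴 : Set (Set (Ideal D)), MaxProductProper D 𝒴 →
      ∃ P : Ideal D, P.IsMaximal ∧ nu D P = 𝒴) ∧
    (∀ P : Ideal D, P.IsMaximal →
      (P : Set D) = {0} ∪ {x : D | x ≠ 0 ∧ Vset D x ∈ nu D P}) := by
  refine ⟨fun P hP => ⟨nu_productProper hP, fun J hJ hsub => nu_max hP hJ hsub⟩,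
    nu_surj, ?_⟩
  intro P hP
  ext x
  constructor
  · intro hx
    by_cases h0 : x = 0
    · exact Or.inl h0
    · exact Or.inr ⟨h0, ⟨x, hx, h0, rfl⟩⟩
  · rintro (h0 | ⟨h0, hV⟩)
    · exact (Set.mem_singleton_iff.1 h0) ▸ P.zero_mem
    · rw [mem_nu_iff hP] at hV
      exact hV.2.2
end

section
/- Let D, D' be Dedekind domains and suppose there is an isomorphism of partially ordered sets between 𝒫(D), the set of ideals that are radicals of nonzero principal ideals (ordered by inclusion), and 𝒫(D'). Then this isomorphism extends to an order isomorphism between the set of all nonzero radical ideals of D and the set of all nonzero radical ideals of D'. -/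
/-- `𝒫(D)`: ideals of `D` that are radicals of nonzero principal ideals. -/
def PrincRadSet (D : Type*) [CommRing D] : Set (Ideal D) :=
  {I : Ideal D | ∃ x : D, x ≠ 0 ∧ I = (Ideal.span {x}).radical}

/-- `Rad(D)`: nonzero radical ideals of `D`. -/
def RadSet (D : Type*) [CommRing D] : Set (Ideal D) :=
  {I : Ideal D | I ≠ ⊥ ∧ I.radical = I}

set_option linter.unusedSectionVars false

namespace OrderIsoExtAux

open Ideal IsDedekindDomain

variable {E : Type*} [CommRing E] [IsDomain E] [IsDedekindDomain E]

/-- The set of height-one primes containing `I`. -/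
def supp (I : Ideal E) : Set (HeightOneSpectrum E) := {P | I ≤ P.asIdeal}

lemma mem_supp {I : Ideal E} {P : HeightOneSpectrum E} : P ∈ supp I ↔ I ≤ P.asIdeal := Iff.rfl

lemma supp_finite {I : Ideal E} (hI : I ≠ ⊥) : (supp I).Finite :=
  (Ideal.finite_factors hI).subset fun _ hP => Ideal.dvd_iff_le.mpr hP

lemma prime_eq_of_le {P Q : HeightOneSpectrum E} (h : P.asIdeal ≤ Q.asIdeal) : P = Q :=
  HeightOneSpectrum.ext ((P.isPrime.isMaximal P.ne_bot).eq_of_le Q.isPrime.ne_top h)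

lemma prod_le_sInf (S : Finset (HeightOneSpectrum E)) :
    (S.prod fun P => P.asIdeal) ≤ sInf (HeightOneSpectrum.asIdeal '' (S : Set (HeightOneSpectrum E))) := by
  apply le_sInf
  rintro J ⟨P, hP, rfl⟩
  exact Ideal.dvd_iff_le.mp (Finset.dvd_prod_of_mem _ hP)

lemma sInf_primes_ne_bot (S : Finset (HeightOneSpectrum E)) :
    sInf (HeightOneSpectrum.asIdeal '' (S : Set (HeightOneSpectrum E))) ≠ ⊥ := by
  intro h
  have h1 := prod_le_sInf S
  rw [h] at h1
  have h2 : (S.prod fun P => P.asIdeal) = ⊥ := le_bot_iff.mp h1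
  have h3 : (S.prod fun P => P.asIdeal) ≠ 0 :=
    Finset.prod_ne_zero_iff.mpr fun P _ => by simpa [Ideal.zero_eq_bot] using P.ne_bot
  rw [Ideal.zero_eq_bot] at h3
  exact h3 h2

lemma sInf_primes_radical (S : Finset (HeightOneSpectrum E)) :
    (sInf (HeightOneSpectrum.asIdeal '' (S : Set (HeightOneSpectrum E)))).radical
      = sInf (HeightOneSpectrum.asIdeal '' (S : Set (HeightOneSpectrum E))) := by
  refine le_antisymm (le_sInf ?_) le_radical
  rintro J ⟨P, hP, rfl⟩
  calc (sInf (HeightOneSpectrum.asIdeal '' (S : Set (HeightOneSpectrum E)))).radical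
      ≤ P.asIdeal.radical := radical_mono (sInf_le ⟨P, hP, rfl⟩)
    _ = P.asIdeal := P.isPrime.radical

lemma mem_supp_sInf (S : Finset (HeightOneSpectrum E)) (Q : HeightOneSpectrum E) :
    Q ∈ supp (sInf (HeightOneSpectrum.asIdeal '' (S : Set (HeightOneSpectrum E)))) ↔ Q ∈ S := by
  constructor
  · intro h
    have h2 : (S.prod fun P => P.asIdeal) ≤ Q.asIdeal := le_trans (prod_le_sInf S) h
    obtain ⟨P, hP, hle⟩ := (Ideal.IsPrime.prod_le Q.isPrime).mp h2
    exact (prime_eq_of_le hle) ▸ hP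
  · intro h
    exact sInf_le (show Q.asIdeal ∈ HeightOneSpectrum.asIdeal '' (S : Set (HeightOneSpectrum E)) from ⟨Q, h, rfl⟩)

lemma radSet_sInf (S : Set (HeightOneSpectrum E)) (hS : S.Finite) :
    sInf (HeightOneSpectrum.asIdeal '' S) ∈ RadSet E := by
  rw [← hS.coe_toFinset]
  exact ⟨sInf_primes_ne_bot _, sInf_primes_radical _⟩

lemma supp_sInf (S : Set (HeightOneSpectrum E)) (hS : S.Finite) :
    supp (sInf (HeightOneSpectrum.asIdeal '' S)) = S := by
  rw [← hS.coe_toFinset]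
  ext Q
  rw [mem_supp_sInf]
  simp

lemma eq_sInf_supp {I : Ideal E} (hI : I ∈ RadSet E) :
    I = sInf (HeightOneSpectrum.asIdeal '' supp I) := by
  conv_lhs => rw [← hI.2]
  rw [radical_eq_sInf]
  congr 1
  ext J
  constructor
  · rintro ⟨h1, h2⟩
    exact ⟨⟨J, h2, fun hbot => hI.1 (le_bot_iff.mp (hbot ▸ h1))⟩, h1, rfl⟩
  · rintro ⟨P, hP, rfl⟩
    exact ⟨hP, P.isPrime⟩

lemma le_iff_supp {I J : Ideal E} (hI : I ∈ RadSet E) (hJ : J ∈ RadSet E) :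
    I ≤ J ↔ supp J ⊆ supp I := by
  constructor
  · intro h Q hQ
    exact le_trans h hQ
  · intro h
    rw [eq_sInf_supp hI, eq_sInf_supp hJ]
    exact sInf_le_sInf (Set.image_mono h)

lemma separation {A F : Set (HeightOneSpectrum E)} (hA : A.Finite) (hF : F.Finite)
    (hd : Disjoint A F) :
    ∃ x : E, x ≠ 0 ∧ (∀ P ∈ A, x ∈ P.asIdeal) ∧ ∀ Q ∈ F, x ∉ Q.asIdeal := by
  classical
  set J : Ideal E := hA.toFinset.prod (fun P => P.asIdeal) with hJdef
  have hJ0 : J ≠ ⊥ := by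
    rw [← Ideal.zero_eq_bot]
    exact Finset.prod_ne_zero_iff.mpr fun P _ => by simpa [Ideal.zero_eq_bot] using P.ne_bot
  set s : Finset (Ideal E) := insert ⊥ (hF.toFinset.image HeightOneSpectrum.asIdeal) with hsdef
  have hprm : ∀ i ∈ s, i ≠ ⊥ → i ≠ ⊥ → (id i : Ideal E).IsPrime := by
    intro i hi _ _
    rw [hsdef, Finset.mem_insert] at hi
    rcases hi with rfl | hi
    · exact Ideal.bot_prime
    · obtain ⟨Q, _, rfl⟩ := Finset.mem_image.mp hi
      exact Q.isPrime
  have hns : ¬ ((J : Set E) ⊆ ⋃ i ∈ (↑s : Set (Ideal E)), ((id i : Ideal E) : Set E)) := by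
    rw [Ideal.subset_union_prime ⊥ ⊥ hprm]
    rintro ⟨K, hK, hle⟩
    rw [hsdef, Finset.mem_insert] at hK
    rcases hK with rfl | hK
    · exact hJ0 (le_bot_iff.mp hle)
    · obtain ⟨Q, hQ, rfl⟩ := Finset.mem_image.mp hK
      obtain ⟨P, hP, hPQ⟩ := (Q.isPrime.prod_le).mp hle
      rw [Set.Finite.mem_toFinset] at hP hQ
      exact Set.disjoint_left.mp hd ((prime_eq_of_le hPQ) ▸ hP) hQ
  rw [Set.not_subset] at hns
  obtain ⟨x, hxJ, hxU⟩ := hns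
  have hx0 : x ≠ 0 := by
    rintro rfl
    exact hxU (Set.mem_biUnion (show (⊥ : Ideal E) ∈ (↑s : Set (Ideal E)) by simp [hsdef])
      (show (0:E) ∈ ((id (⊥ : Ideal E) : Ideal E) : Set E) by simp))
  refine ⟨x, hx0, fun P hP => ?_, fun Q hQ hxQ => ?_⟩
  · have : J ≤ P.asIdeal :=
      Ideal.dvd_iff_le.mp (Finset.dvd_prod_of_mem _ (hA.mem_toFinset.mpr hP))
    exact this hxJ
  · exact hxU (Set.mem_biUnion (show Q.asIdeal ∈ (↑s : Set (Ideal E)) by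
      simp only [hsdef, Finset.coe_insert, Set.mem_insert_iff, Finset.coe_image, Set.mem_image,
        Finset.mem_coe, Set.Finite.mem_toFinset]
      exact Or.inr ⟨Q, hQ, rfl⟩) hxQ)


/-! ### `𝒫`-specific lemmas -/

lemma rad_span_mem_princ {x : E} (hx : x ≠ 0) : (span {x}).radical ∈ PrincRadSet E :=
  ⟨x, hx, rfl⟩

/-- packaging -/
def mk' (x : E) (hx : x ≠ 0) : PrincRadSet E := ⟨(span {x}).radical, rad_span_mem_princ hx⟩

lemma princ_subset_radSet : PrincRadSet E ⊆ RadSet E := by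
  rintro I ⟨x, hx, rfl⟩
  refine ⟨fun h => ?_, radical_idem _⟩
  have hmem : x ∈ (span ({x} : Set E)).radical := le_radical (Ideal.mem_span_singleton_self x)
  rw [h, Ideal.mem_bot] at hmem
  exact hx hmem

lemma rad_span_le_prime {x : E} {P : HeightOneSpectrum E} :
    (span ({x} : Set E)).radical ≤ P.asIdeal ↔ x ∈ P.asIdeal := by
  rw [P.isPrime.isRadical.radical_le_iff, span_singleton_le_iff_mem]

lemma mem_supp_rad_span {x : E} {P : HeightOneSpectrum E} :
    P ∈ supp ((span ({x} : Set E)).radical) ↔ x ∈ P.asIdeal := rad_span_le_prime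

lemma inf_mem_princ {A B : Ideal E} (hA : A ∈ PrincRadSet E) (hB : B ∈ PrincRadSet E) :
    A ⊓ B ∈ PrincRadSet E := by
  obtain ⟨x, hx, rfl⟩ := hA
  obtain ⟨y, hy, rfl⟩ := hB
  exact ⟨x * y, mul_ne_zero hx hy, by
    rw [← Ideal.span_singleton_mul_span_singleton, Ideal.radical_mul]⟩

lemma top_mem_princ : (⊤ : Ideal E) ∈ PrincRadSet E :=
  ⟨1, one_ne_zero, by rw [Ideal.span_singleton_one, Ideal.radical_top]⟩

/-- prime filters in `𝒫(E)` -/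
def IsPF (G : Set (PrincRadSet E)) : Prop :=
  G.Nonempty ∧
  (∀ A B : PrincRadSet E, (A : Ideal E) ≤ (B : Ideal E) → B ∈ G → A ∈ G) ∧
  (∀ A B C : PrincRadSet E, (C : Ideal E) = (A : Ideal E) ⊓ (B : Ideal E) →
    C ∈ G → A ∈ G ∨ B ∈ G)

/-- the filter attached to a height-one prime -/
def pF (P : HeightOneSpectrum E) : Set (PrincRadSet E) :=
  {A | (A : Ideal E) ≤ P.asIdeal}

lemma isPF_pF (P : HeightOneSpectrum E) : IsPF (pF P) := by
  refine ⟨?_, ?_, ?_⟩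
  · obtain ⟨x, hxP, hx0⟩ := Submodule.exists_mem_ne_zero_of_ne_bot P.ne_bot
    exact ⟨mk' x hx0, rad_span_le_prime.mpr hxP⟩
  · intro A B hAB hB
    exact le_trans hAB hB
  · intro A B C hC hCmem
    have h1 : (A : Ideal E) * (B : Ideal E) ≤ P.asIdeal :=
      le_trans Ideal.mul_le_inf (hC ▸ hCmem)
    exact (Ideal.IsPrime.mul_le P.isPrime).mp h1

lemma pF_inj {P Q : HeightOneSpectrum E} (h : pF P ⊆ pF Q) : P = Q := by
  by_contra hne
  obtain ⟨x, hx0, hxP, hxQ⟩ := separation (Set.finite_singleton P) (Set.finite_singleton Q)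
    (Set.disjoint_singleton.mpr hne)
  have h1 : mk' x hx0 ∈ pF P := rad_span_le_prime.mpr (hxP P rfl)
  exact hxQ Q rfl (rad_span_le_prime.mp (h h1))

lemma mem_of_prod_mem {G : Set (PrincRadSet E)} (hG : IsPF G)
    (hprop : ∀ A : PrincRadSet E, (A : Ideal E) = ⊤ → A ∉ G) :
    ∀ (s : Finset (HeightOneSpectrum E)) (x : HeightOneSpectrum E → E)
      (hx : ∀ i, x i ≠ 0) (hy : s.prod x ≠ 0),
      mk' (s.prod x) hy ∈ G → ∃ i ∈ s, mk' (x i) (hx i) ∈ G := by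
  classical
  intro s
  induction s using Finset.induction_on with
  | empty =>
      intro x hx hy hmem
      exfalso
      refine hprop (mk' _ hy) ?_ hmem
      show (span ({Finset.prod ∅ x} : Set E)).radical = ⊤
      rw [Finset.prod_empty, Ideal.span_singleton_one, Ideal.radical_top]
  | insert i s hnotmem ih =>
      intro x hx hy hmem
      have hy2 : s.prod x ≠ 0 := by
        intro h
        rw [Finset.prod_insert hnotmem, h, mul_zero] at hy
        exact hy rfl
      have hsplit : (mk' ((insert i s).prod x) hy : Ideal E) =
          (mk' (x i) (hx i) : Ideal E) ⊓ (mk' (s.prod x) hy2 : Ideal E) := by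
        show (span ({Finset.prod (insert i s) x} : Set E)).radical = _
        rw [Finset.prod_insert hnotmem, ← Ideal.span_singleton_mul_span_singleton,
          Ideal.radical_mul]
        rfl
      rcases hG.2.2 _ _ _ hsplit hmem with h | h
      · exact ⟨i, Finset.mem_insert_self i s, h⟩
      · obtain ⟨j, hj, hhj⟩ := ih x hx hy2 h
        exact ⟨j, Finset.mem_insert_of_mem hj, hhj⟩

lemma exists_pF_subset {G : Set (PrincRadSet E)} (hG : IsPF G)
    (hprop : ∀ A : PrincRadSet E, (A : Ideal E) = ⊤ → A ∉ G) :
    ∃ Q : HeightOneSpectrum E, pF Q ⊆ G := by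
  classical
  by_contra hcon
  push_neg at hcon
  simp only [Set.not_subset] at hcon
  obtain ⟨S, hS⟩ := hG.1
  have hSrad : (S : Ideal E) ∈ RadSet E := princ_subset_radSet S.2
  have hfin : (supp (S : Ideal E)).Finite := supp_finite hSrad.1
  -- choose witnesses
  have hwit : ∀ Q : HeightOneSpectrum E, ∃ x : E, x ≠ 0 ∧ x ∈ Q.asIdeal ∧
      ∀ hx : x ≠ 0, mk' x hx ∉ G := by
    intro Q
    obtain ⟨A, hApF, hAG⟩ := hcon Q
    obtain ⟨x, hx0, hxeq⟩ := A.2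
    refine ⟨x, hx0, ?_, fun hx hmem => ?_⟩
    · apply rad_span_le_prime.mp
      rw [← hxeq]
      exact hApF
    · apply hAG
      have : mk' x hx = A := Subtype.ext hxeq.symm
      rwa [this] at hmem
  choose x hx0 hxQ hxG using hwit
  set s := hfin.toFinset with hsdef
  have hy : s.prod x ≠ 0 := Finset.prod_ne_zero_iff.mpr fun i _ => hx0 i
  have hT : (mk' _ hy : Ideal E) ≤ (S : Ideal E) := by
    rw [le_iff_supp (princ_subset_radSet (mk' _ hy).2) hSrad]
    intro Q hQ
    refine mem_supp_rad_span.mpr ?_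
    have hQs : Q ∈ s := hfin.mem_toFinset.mpr hQ
    have : x Q ∣ s.prod x := Finset.dvd_prod_of_mem x hQs
    obtain ⟨c, hc⟩ := this
    rw [hc]
    exact Ideal.mul_mem_right c _ (hxQ Q)
  have hTG : mk' _ hy ∈ G := hG.2.1 _ S hT hS
  obtain ⟨i, _, hi⟩ := mem_of_prod_mem hG hprop s x hx0 hy hTG
  exact hxG i (hx0 i) hi

lemma pF_subset_of_subset {H : Set (PrincRadSet E)} (hH : IsPF H) {P : HeightOneSpectrum E}
    (hsub : H ⊆ pF P) : pF P ⊆ H := by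
  obtain ⟨S, hS⟩ := hH.1
  have hSP : (S : Ideal E) ≤ P.asIdeal := hsub hS
  have hSrad : (S : Ideal E) ∈ RadSet E := princ_subset_radSet S.2
  have hfinS : (supp (S : Ideal E)).Finite := supp_finite hSrad.1
  -- Step 1: produce an element of H supported only at P among supp S
  obtain ⟨a, ha0, haP, haQ⟩ := separation (Set.finite_singleton P) (hfinS.diff (t := {P}))
    (Set.disjoint_right.mpr fun Q hQ => hQ.2)
  obtain ⟨b, hb0, hbQ, hbP⟩ := separation (hfinS.diff (t := {P})) (Set.finite_singleton P)
    (Set.disjoint_left.mpr fun Q hQ => fun hQP => hQ.2 hQP)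
  have hab0 : a * b ≠ 0 := mul_ne_zero ha0 hb0
  have hABsplit : (mk' _ hab0 : Ideal E) = (mk' a ha0 : Ideal E) ⊓ (mk' b hb0 : Ideal E) := by
    show (span ({a * b} : Set E)).radical = _
    rw [← Ideal.span_singleton_mul_span_singleton, Ideal.radical_mul]
    rfl
  have hABle : (mk' _ hab0 : Ideal E) ≤ (S : Ideal E) := by
    rw [le_iff_supp (princ_subset_radSet (mk' _ hab0).2) hSrad]
    intro Q hQ
    refine mem_supp_rad_span.mpr ?_
    by_cases hQP : Q = P
    · subst hQP
      exact Ideal.mul_mem_right b _ (haP Q rfl)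
    · exact Ideal.mul_mem_left _ a (hbQ Q ⟨hQ, by simpa using hQP⟩)
  have hABH : mk' _ hab0 ∈ H := hH.2.1 _ S hABle hS
  have hAH : mk' a ha0 ∈ H := by
    rcases hH.2.2 _ _ _ hABsplit hABH with h | h
    · exact h
    · exfalso
      have := hsub h
      exact hbP P rfl (rad_span_le_prime.mp this)
  -- Step 2: any T ∈ pF P belongs to H
  intro T hT
  obtain ⟨t, ht0, hteq⟩ := T.2
  have htP : t ∈ P.asIdeal := by
    apply rad_span_le_prime.mp
    rw [← hteq]
    exact hT
  have hfinA : (supp ((mk' a ha0 : Ideal E))).Finite :=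
    supp_finite (princ_subset_radSet (mk' a ha0).2).1
  obtain ⟨c, hc0, hcQ, hcP⟩ := separation (hfinA.diff (t := {P})) (Set.finite_singleton P)
    (Set.disjoint_left.mpr fun Q hQ => fun hQP => hQ.2 hQP)
  have htc0 : t * c ≠ 0 := mul_ne_zero ht0 hc0
  have hTCsplit : (mk' _ htc0 : Ideal E) = (mk' t ht0 : Ideal E) ⊓ (mk' c hc0 : Ideal E) := by
    show (span ({t * c} : Set E)).radical = _
    rw [← Ideal.span_singleton_mul_span_singleton, Ideal.radical_mul]
    rfl
  have hTCle : (mk' _ htc0 : Ideal E) ≤ (mk' a ha0 : Ideal E) := by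
    rw [le_iff_supp (princ_subset_radSet (mk' _ htc0).2) (princ_subset_radSet (mk' a ha0).2)]
    intro Q hQ
    refine mem_supp_rad_span.mpr ?_
    by_cases hQP : Q = P
    · subst hQP
      exact Ideal.mul_mem_right c _ htP
    · exact Ideal.mul_mem_left _ t (hcQ Q ⟨hQ, by simpa using hQP⟩)
  have hTCH : mk' _ htc0 ∈ H := hH.2.1 _ _ hTCle hAH
  rcases hH.2.2 _ _ _ hTCsplit hTCH with h | h
  · have : mk' t ht0 = T := Subtype.ext hteq.symm
    rwa [this] at h
  · exfalso
    exact hcP P rfl (rad_span_le_prime.mp (hsub h))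


section Transfer

variable {E' : Type*} [CommRing E'] [IsDomain E'] [IsDedekindDomain E']
variable (φ : (PrincRadSet E) ≃o (PrincRadSet E'))

lemma map_inf' (A B : PrincRadSet E) :
    ((φ ⟨(A : Ideal E) ⊓ (B : Ideal E), inf_mem_princ A.2 B.2⟩ : PrincRadSet E') : Ideal E')
      = (φ A : Ideal E') ⊓ (φ B : Ideal E') := by
  set C : PrincRadSet E := ⟨(A : Ideal E) ⊓ (B : Ideal E), inf_mem_princ A.2 B.2⟩ with hC
  apply le_antisymm
  · refine le_inf ?_ ?_
    · exact Subtype.coe_le_coe.mpr (φ.monotone (Subtype.coe_le_coe.mp inf_le_left))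
    · exact Subtype.coe_le_coe.mpr (φ.monotone (Subtype.coe_le_coe.mp inf_le_right))
  · set C' : PrincRadSet E' := ⟨(φ A : Ideal E') ⊓ (φ B : Ideal E'),
      inf_mem_princ (φ A).2 (φ B).2⟩ with hC'
    have h1 : φ.symm C' ≤ A := by
      have : C' ≤ φ A := Subtype.coe_le_coe.mp inf_le_left
      simpa using φ.symm.monotone this
    have h2 : φ.symm C' ≤ B := by
      have : C' ≤ φ B := Subtype.coe_le_coe.mp inf_le_right
      simpa using φ.symm.monotone this
    have h3 : φ.symm C' ≤ C := by
      refine Subtype.coe_le_coe.mp ?_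
      exact le_inf (Subtype.coe_le_coe.mpr h1) (Subtype.coe_le_coe.mpr h2)
    have h4 : C' ≤ φ C := by
      have := φ.monotone h3
      rwa [φ.apply_symm_apply] at this
    exact Subtype.coe_le_coe.mpr h4

lemma isPF_image {G : Set (PrincRadSet E)} (hG : IsPF G) : IsPF (φ '' G) := by
  refine ⟨hG.1.image φ, ?_, ?_⟩
  · rintro A' B' hle ⟨B, hB, rfl⟩
    refine ⟨φ.symm A', hG.2.1 _ B ?_ hB, φ.apply_symm_apply A'⟩
    have : A' ≤ φ B := Subtype.coe_le_coe.mp hle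
    have h2 := φ.symm.monotone this
    rw [φ.symm_apply_apply] at h2
    exact Subtype.coe_le_coe.mpr h2
  · rintro A' B' C' hsplit ⟨C, hC, rfl⟩
    have hC'eq : φ C = ⟨(A' : Ideal E') ⊓ (B' : Ideal E'), inf_mem_princ A'.2 B'.2⟩ :=
      Subtype.ext hsplit
    have hCeq : C = φ.symm ⟨(A' : Ideal E') ⊓ (B' : Ideal E'), inf_mem_princ A'.2 B'.2⟩ := by
      rw [← hC'eq, φ.symm_apply_apply]
    have hkey : (C : Ideal E) = (φ.symm A' : Ideal E) ⊓ (φ.symm B' : Ideal E) := by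
      rw [hCeq]
      have := map_inf' φ.symm A' B'
      exact this
    rcases hG.2.2 _ _ _ hkey hC with h | h
    · exact Or.inl ⟨φ.symm A', h, φ.apply_symm_apply A'⟩
    · exact Or.inr ⟨φ.symm B', h, φ.apply_symm_apply B'⟩

lemma image_proper {P : HeightOneSpectrum E} :
    ∀ A' : PrincRadSet E', (A' : Ideal E') = ⊤ → A' ∉ φ '' (pF P) := by
  rintro A' htop ⟨A, hA, rfl⟩
  -- A = φ.symm of the top element, hence A is the top ideal
  have hAtop : (A : Ideal E) = ⊤ := by
    have h1 : φ ⟨⊤, top_mem_princ⟩ ≤ φ A := Subtype.coe_le_coe.mp (by rw [htop]; exact le_top)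
    have h2 : (⟨⊤, top_mem_princ⟩ : PrincRadSet E) ≤ A := φ.le_iff_le.mp h1
    exact top_le_iff.mp (Subtype.coe_le_coe.mpr h2)
  have hA2 : (A : Ideal E) ≤ P.asIdeal := hA
  rw [hAtop] at hA2
  exact P.isPrime.ne_top (top_le_iff.mp hA2)

lemma exists_rel (P : HeightOneSpectrum E) :
    ∃ Q : HeightOneSpectrum E', ∀ A : PrincRadSet E,
      (A : Ideal E) ≤ P.asIdeal ↔ ((φ A : PrincRadSet E') : Ideal E') ≤ Q.asIdeal := by
  have hG : IsPF (φ '' pF P) := isPF_image φ (isPF_pF P)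
  obtain ⟨Q, hQ⟩ := exists_pF_subset hG (image_proper φ)
  have hH : IsPF (φ.symm '' pF Q) := isPF_image φ.symm (isPF_pF Q)
  have hHsub : φ.symm '' pF Q ⊆ pF P := by
    rintro X ⟨A', hA', rfl⟩
    obtain ⟨C, hC, hCeq⟩ := hQ hA'
    rw [← hCeq, φ.symm_apply_apply]
    exact hC
  have hPH : pF P ⊆ φ.symm '' pF Q := pF_subset_of_subset hH hHsub
  refine ⟨Q, fun A => ⟨fun hA => ?_, fun hA => ?_⟩⟩
  · obtain ⟨A', hA', hAeq⟩ := hPH hA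
    rw [← hAeq, φ.apply_symm_apply]
    exact hA'
  · obtain ⟨C, hC, hCeq⟩ := hQ hA
    have : C = A := φ.injective hCeq
    exact this ▸ hC

lemma rel_unique {P : HeightOneSpectrum E} {Q Q' : HeightOneSpectrum E'}
    (h : ∀ A : PrincRadSet E,
      (A : Ideal E) ≤ P.asIdeal ↔ ((φ A : PrincRadSet E') : Ideal E') ≤ Q.asIdeal)
    (h' : ∀ A : PrincRadSet E,
      (A : Ideal E) ≤ P.asIdeal ↔ ((φ A : PrincRadSet E') : Ideal E') ≤ Q'.asIdeal) :
    Q = Q' := by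
  apply pF_inj
  intro A' hA'
  have h1 : ((φ (φ.symm A') : PrincRadSet E') : Ideal E') ≤ Q.asIdeal := by
    rwa [φ.apply_symm_apply]
  have h2 := (h' (φ.symm A')).mp ((h (φ.symm A')).mpr h1)
  rwa [φ.apply_symm_apply] at h2

end Transfer

end OrderIsoExtAux

open OrderIsoExtAux IsDedekindDomain

/-- Any order isomorphism `𝒫(D) ≃o 𝒫(D')` between Dedekind domains extends to an order
isomorphism `Rad(D) ≃o Rad(D')`. -/
theorem orderIso_extends {D D' : Type*}
    [CommRing D] [IsDomain D] [IsDedekindDomain D]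
    [CommRing D'] [IsDomain D'] [IsDedekindDomain D']
    (ψ : (PrincRadSet D) ≃o (PrincRadSet D')) :
    ∃ Φ : (RadSet D) ≃o (RadSet D'),
      ∀ (I : Ideal D) (hR : I ∈ RadSet D) (hP : I ∈ PrincRadSet D),
        ((Φ ⟨I, hR⟩ : RadSet D') : Ideal D') = ((ψ ⟨I, hP⟩ : PrincRadSet D') : Ideal D') := by
  classical
  set σ : HeightOneSpectrum D → HeightOneSpectrum D' := fun P => (exists_rel ψ P).choose
    with hσdef
  have hσ : ∀ (P : HeightOneSpectrum D) (A : PrincRadSet D),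
      (A : Ideal D) ≤ P.asIdeal ↔ ((ψ A : PrincRadSet D') : Ideal D') ≤ (σ P).asIdeal :=
    fun P => (exists_rel ψ P).choose_spec
  set τ : HeightOneSpectrum D' → HeightOneSpectrum D := fun Q => (exists_rel ψ.symm Q).choose
    with hτdef
  have hτ : ∀ (Q : HeightOneSpectrum D') (A' : PrincRadSet D'),
      (A' : Ideal D') ≤ Q.asIdeal ↔ ((ψ.symm A' : PrincRadSet D) : Ideal D) ≤ (τ Q).asIdeal :=
    fun Q => (exists_rel ψ.symm Q).choose_spec
  have hτσ : ∀ P, τ (σ P) = P := by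
    intro P
    refine rel_unique ψ.symm (hτ (σ P)) ?_
    intro A'
    have h1 := hσ P (ψ.symm A')
    rw [ψ.apply_symm_apply] at h1
    exact h1.symm
  have hστ : ∀ Q, σ (τ Q) = Q := by
    intro Q
    refine rel_unique ψ (hσ (τ Q)) ?_
    intro A
    have h1 := hτ Q (ψ A)
    rw [ψ.symm_apply_apply] at h1
    exact h1.symm
  have hσinj : Function.Injective σ := fun P P' h => by
    rw [← hτσ P, ← hτσ P', h]
  have hτinj : Function.Injective τ := fun Q Q' h => by
    rw [← hστ Q, ← hστ Q', h]
  have hsupp_psi : ∀ A : PrincRadSet D,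
      supp ((ψ A : PrincRadSet D') : Ideal D') = σ '' supp (A : Ideal D) := by
    intro A
    ext Q
    constructor
    · intro hQ
      have h1 := (hτ Q (ψ A)).mp hQ
      rw [ψ.symm_apply_apply] at h1
      exact ⟨τ Q, h1, hστ Q⟩
    · rintro ⟨P, hP, rfl⟩
      exact mem_supp.mpr ((hσ P A).mp hP)
  have hFmem : ∀ I : RadSet D,
      sInf (HeightOneSpectrum.asIdeal '' (σ '' supp (I : Ideal D))) ∈ RadSet D' :=
    fun I => radSet_sInf _ ((supp_finite I.2.1).image σ)
  have hGmem : ∀ I' : RadSet D',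
      sInf (HeightOneSpectrum.asIdeal '' (τ '' supp (I' : Ideal D'))) ∈ RadSet D :=
    fun I' => radSet_sInf _ ((supp_finite I'.2.1).image τ)
  set F : RadSet D → RadSet D' := fun I => ⟨_, hFmem I⟩ with hFdef
  set G : RadSet D' → RadSet D := fun I' => ⟨_, hGmem I'⟩ with hGdef
  have hsuppF : ∀ I : RadSet D, supp ((F I : RadSet D') : Ideal D') = σ '' supp (I : Ideal D) :=
    fun I => supp_sInf _ ((supp_finite I.2.1).image σ)
  have hsuppG : ∀ I' : RadSet D', supp ((G I' : RadSet D) : Ideal D) = τ '' supp (I' : Ideal D') :=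
    fun I' => supp_sInf _ ((supp_finite I'.2.1).image τ)
  have hleft : ∀ I : RadSet D, G (F I) = I := by
    intro I
    apply Subtype.ext
    show sInf (HeightOneSpectrum.asIdeal '' (τ '' supp ((F I : RadSet D') : Ideal D')))
      = (I : Ideal D)
    rw [hsuppF]
    have himg : τ '' (σ '' supp (I : Ideal D)) = supp (I : Ideal D) := by
      rw [Set.image_image]
      simp only [hτσ]
      exact Set.image_id _
    rw [himg]
    exact (eq_sInf_supp I.2).symm
  have hright : ∀ I' : RadSet D', F (G I') = I' := by
    intro I'
    apply Subtype.ext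
    show sInf (HeightOneSpectrum.asIdeal '' (σ '' supp ((G I' : RadSet D) : Ideal D)))
      = (I' : Ideal D')
    rw [hsuppG]
    have himg : σ '' (τ '' supp (I' : Ideal D')) = supp (I' : Ideal D') := by
      rw [Set.image_image]
      simp only [hστ]
      exact Set.image_id _
    rw [himg]
    exact (eq_sInf_supp I'.2).symm
  refine ⟨{ toFun := F, invFun := G, left_inv := hleft, right_inv := hright,
            map_rel_iff' := ?_ }, ?_⟩
  · intro I J
    show F I ≤ F J ↔ I ≤ J
    rw [← Subtype.coe_le_coe, ← Subtype.coe_le_coe,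
      le_iff_supp (F I).2 (F J).2, hsuppF, hsuppF,
      Set.image_subset_image_iff hσinj, ← le_iff_supp I.2 J.2]
  · intro I hR hP
    show ((F ⟨I, hR⟩ : RadSet D') : Ideal D') = ((ψ ⟨I, hP⟩ : PrincRadSet D') : Ideal D')
    have h1 : supp ((⟨I, hR⟩ : RadSet D) : Ideal D) = supp ((⟨I, hP⟩ : PrincRadSet D) : Ideal D) :=
      rfl
    show sInf (HeightOneSpectrum.asIdeal '' (σ '' supp ((⟨I, hR⟩ : RadSet D) : Ideal D)))
      = ((ψ ⟨I, hP⟩ : PrincRadSet D') : Ideal D')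
    rw [h1, ← hsupp_psi ⟨I, hP⟩]
    exact (eq_sInf_supp (princ_subset_radSet (ψ ⟨I, hP⟩).2)).symm
end

section
/- Let D be a Dedekind domain. The class group Cl(D) is a torsion group if and only if every ideal that is a nonzero radical ideal is the radical of a principal ideal, i.e., 𝒫(D) = Rad(D). -/
open Ideal UniqueFactorizationMonoid nonZeroDivisors

section Aux

variable {D : Type*} [CommRing D] [IsDomain D] [IsDedekindDomain D]

omit [IsDomain D] [IsDedekindDomain D] in
lemma radical_finset_prod {ι : Type*} (s : Finset ι) (f : ι → Ideal D) :
    (∏ i ∈ s, f i).radical = s.inf fun i => (f i).radical := by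
  classical
  induction s using Finset.cons_induction with
  | empty => simp [Ideal.one_eq_top, Ideal.radical_top]
  | cons a s ha ih => rw [Finset.prod_cons, Ideal.radical_mul, ih, Finset.inf_cons]

/-- If the class group is torsion, every nonzero prime ideal has a nonzero
principal power. -/
lemma exists_pow_principal (h : Monoid.IsTorsion (ClassGroup D)) {P : Ideal D} (hP : P ≠ ⊥) :
    ∃ x : D, x ≠ 0 ∧ ∃ n : ℕ, n ≠ 0 ∧ P ^ n = Ideal.span {x} := by
  have hPm : P ∈ (Ideal D)⁰ := mem_nonZeroDivisors_of_ne_zero hP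
  obtain ⟨n, hn, hpow⟩ := (isOfFinOrder_iff_pow_eq_one).mp (h (ClassGroup.mk0 ⟨P, hPm⟩))
  have h1 : ClassGroup.mk0 (⟨P, hPm⟩ ^ n) = 1 := by rw [map_pow]; exact hpow
  have hprin : (P ^ n).IsPrincipal := by
    rw [ClassGroup.mk0_eq_one_iff] at h1
    exact h1
  obtain ⟨x, hx⟩ := hprin
  refine ⟨x, ?_, n, hn.ne', hx⟩
  rintro rfl
  rw [Set.singleton_zero, Submodule.span_zero] at hx
  exact pow_ne_zero n hP hx

/-- Forward direction: torsion class group implies every nonzero radical ideal is the radical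
of a nonzero principal ideal. -/
lemma radSet_subset_princRadSet (h : Monoid.IsTorsion (ClassGroup D)) :
    RadSet D ⊆ PrincRadSet D := by
  classical
  rintro I ⟨hI0, hIrad⟩
  set s := (normalizedFactors I).toFinset with hs
  have hprime : ∀ P ∈ s, Prime P := fun P hP =>
    prime_of_normalized_factor P (Multiset.mem_toFinset.mp hP)
  have key : ∀ P ∈ s, ∃ x : D, x ≠ 0 ∧ ∃ n : ℕ, n ≠ 0 ∧ P ^ n = Ideal.span {x} :=
    fun P hP => exists_pow_principal h (hprime P hP).ne_zero
  choose! x hx n hn hxn using key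
  refine ⟨∏ P ∈ s, x P, Finset.prod_ne_zero_iff.mpr fun P hP => hx P hP, ?_⟩
  rw [← Ideal.prod_span_singleton]
  have h1 : ∏ P ∈ s, Ideal.span {x P} = ∏ P ∈ s, P ^ (n P) :=
    Finset.prod_congr rfl fun P hP => (hxn P hP).symm
  have h2 : I = ∏ P ∈ s, P ^ (normalizedFactors I).count P := by
    conv_lhs => rw [← associated_iff_eq.mp (prod_normalizedFactors hI0)]
    rw [Finset.prod_multiset_count]
  rw [h1, radical_finset_prod]
  conv_lhs => rw [← hIrad, h2, radical_finset_prod]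
  refine Finset.inf_congr rfl fun P hP => ?_
  rw [Ideal.radical_pow _ (hn P hP),
    Ideal.radical_pow _ (Multiset.count_ne_zero.mpr (Multiset.mem_toFinset.mp hP))]

/-- Reverse direction, prime case: every class of a nonzero prime ideal has finite order. -/
lemma prime_isOfFinOrder (heq : PrincRadSet D = RadSet D) {P : Ideal D} (hP : Prime P)
    (hm : P ∈ (Ideal D)⁰) : IsOfFinOrder (ClassGroup.mk0 ⟨P, hm⟩) := by
  have hPp : P.IsPrime := Ideal.isPrime_of_prime hP
  have hPb : P ≠ ⊥ := hP.ne_zero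
  have hPrad : P ∈ RadSet D := ⟨hPb, hPp.radical⟩
  rw [← heq] at hPrad
  obtain ⟨y, hy, hPy⟩ := hPrad
  have hyb : Ideal.span {y} ≠ ⊥ := by simpa [Ideal.span_singleton_eq_bot] using hy
  have hyt : Ideal.span {y} ≠ ⊤ := by
    intro ht
    rw [ht, Ideal.radical_top] at hPy
    exact hPp.ne_top hPy
  have hall : ∀ Q ∈ normalizedFactors (Ideal.span {y}), Q = P := by
    intro Q hQ
    have hQp : Q.IsPrime := Ideal.isPrime_of_prime (prime_of_normalized_factor Q hQ)
    have hle : Ideal.span {y} ≤ Q := Ideal.le_of_dvd (dvd_of_mem_normalizedFactors hQ)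
    have hPQ : P ≤ Q := by
      rw [hPy, ← hQp.radical]
      exact Ideal.radical_mono hle
    exact ((hPp.isMaximal hPb).eq_of_le hQp.ne_top hPQ).symm
  have hprod : (normalizedFactors (Ideal.span {y})).prod = Ideal.span {y} :=
    associated_iff_eq.mp (prod_normalizedFactors hyb)
  set k := (normalizedFactors (Ideal.span {y})).card with hk
  have hPk : P ^ k = Ideal.span {y} := by
    rw [← hprod, Multiset.eq_replicate_of_mem hall, Multiset.prod_replicate]
  have hk0 : k ≠ 0 := by
    intro h0
    rw [h0, pow_zero, Ideal.one_eq_top] at hPk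
    exact hyt hPk.symm
  refine isOfFinOrder_iff_pow_eq_one.mpr ⟨k, Nat.pos_of_ne_zero hk0, ?_⟩
  rw [← map_pow]
  have : (⟨P, hm⟩ : (Ideal D)⁰) ^ k = ⟨P ^ k, pow_mem hm k⟩ := by
    ext; simp
  rw [this, ClassGroup.mk0_eq_one_iff]
  exact ⟨y, hPk⟩

/-- Reverse direction: if every nonzero radical ideal is the radical of a nonzero principal
ideal, then the class group is torsion. -/
lemma isTorsion_of_princRad_eq_rad (heq : PrincRadSet D = RadSet D) :
    Monoid.IsTorsion (ClassGroup D) := by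
  intro g
  obtain ⟨⟨I, hI⟩, rfl⟩ := ClassGroup.mk0_surjective g
  revert hI
  refine UniqueFactorizationMonoid.induction_on_prime I ?_ ?_ ?_
  · intro hI
    rw [mem_nonZeroDivisors_iff_ne_zero] at hI
    exact absurd rfl hI
  · intro u hu hI
    obtain rfl : u = ⊤ := Ideal.isUnit_iff.mp hu
    have h1 : ClassGroup.mk0 ⟨⊤, hI⟩ = 1 :=
      (ClassGroup.mk0_eq_one_iff hI).mpr ⟨1, by simp⟩
    rw [h1]
    exact IsOfFinOrder.one
  · intro a p ha hp ih hI
    have hpa : (⟨p * a, hI⟩ : (Ideal D)⁰) =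
        ⟨p, mem_nonZeroDivisors_of_ne_zero hp.ne_zero⟩ *
        ⟨a, mem_nonZeroDivisors_of_ne_zero ha⟩ := by
      ext; simp
    rw [hpa, MonoidHom.map_mul]
    exact (prime_isOfFinOrder heq hp _).mul (ih _)

end Aux

/-- For a Dedekind domain `D`, the class group `Cl(D)` is torsion if and only if every nonzero
radical ideal is the radical of a nonzero principal ideal, i.e. `𝒫(D) = Rad(D)`. -/
theorem classGroup_isTorsion_iff_princRad_eq_rad
    {D : Type*} [CommRing D] [IsDomain D] [IsDedekindDomain D] :
    Monoid.IsTorsion (ClassGroup D) ↔ PrincRadSet D = RadSet D := by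
  constructor
  · intro h
    refine le_antisymm ?_ (radSet_subset_princRadSet h)
    rintro I ⟨x, hx, rfl⟩
    refine ⟨?_, Ideal.radical_idem _⟩
    intro hbot
    have hle : Ideal.span {x} ≤ ⊥ := hbot ▸ Ideal.le_radical
    exact hx (Ideal.span_singleton_eq_bot.mp (le_bot_iff.mp hle))
  · exact isTorsion_of_princRad_eq_rad
end

section
/- Let V be a finite-dimensional ℚ-vector space, W ≤ V a subspace, and z₁,…,z_t ∈ V such that the positive cone generated by W ∪ {z₁,…,z_t} is a linear subspace of V. Then the dimension of the span of W ∪ {z₁,…,z_t} is at most dim W + t − 1 (assuming t ≥ 1). -/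
/-- The positive cone spanned by a subset of a `ℚ`-vector space. -/
def posCone {V : Type*} [AddCommGroup V] [Module ℚ V] (S : Set V) : Set V :=
  {v | ∃ (s : Finset V) (c : V → ℚ), ↑s ⊆ S ∧ (∀ x ∈ s, 0 ≤ c x) ∧ v = ∑ x ∈ s, c x • x}

/-- If `W` is a subspace of a finite-dimensional `ℚ`-vector space `V` and `z₁, …, z_t ∈ V`
(`t ≥ 1`) are such that the positive cone generated by `W ∪ {z₁, …, z_t}` is a linear subspace,
then the span of `W ∪ {z₁, …, z_t}` has dimension at most `dim W + t - 1`. -/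
theorem dim_span_le_of_posCone_subspace
    {V : Type*} [AddCommGroup V] [Module ℚ V] [FiniteDimensional ℚ V]
    (W : Submodule ℚ V) {t : ℕ} (ht : 1 ≤ t) (z : Fin t → V)
    (h : ∃ U : Submodule ℚ V, ↑U = posCone ((W : Set V) ∪ Set.range z)) :
    Module.finrank ℚ (Submodule.span ℚ ((W : Set V) ∪ Set.range z)) ≤
      Module.finrank ℚ W + t - 1 := by
  classical
  obtain ⟨U, hU⟩ := h
  set i₀ : Fin t := ⟨0, ht⟩ with hi₀
  set F : Finset V := (Finset.univ.erase i₀).image z with hF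
  set M : Submodule ℚ V := W ⊔ Submodule.span ℚ (F : Set V) with hM
  -- z i₀ ∈ posCone
  have hz0mem : z i₀ ∈ posCone ((W : Set V) ∪ Set.range z) := by
    refine ⟨{z i₀}, fun _ => 1, ?_, by norm_num, by simp⟩
    simp only [Finset.coe_singleton, Set.singleton_subset_iff]
    exact Or.inr ⟨i₀, rfl⟩
  have hneg : -z i₀ ∈ posCone ((W : Set V) ∪ Set.range z) := by
    rw [← hU] at hz0mem ⊢
    exact U.neg_mem hz0mem
  obtain ⟨s, c, hs, hc, heq⟩ := hneg
  -- key: the sum has the form a • z i₀ + m with a ≥ 0, m ∈ M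
  have key : ∀ s : Finset V, (↑s ⊆ (W : Set V) ∪ Set.range z) → (∀ x ∈ s, 0 ≤ c x) →
      ∃ a : ℚ, 0 ≤ a ∧ (∑ x ∈ s, c x • x) - a • z i₀ ∈ M := by
    intro s
    induction s using Finset.induction_on with
    | empty => exact fun _ _ => ⟨0, le_rfl, by simp⟩
    | @insert x s' hx ih =>
      intro hs hc
      have hs' : (s' : Set V) ⊆ (W : Set V) ∪ Set.range z := by
        refine subset_trans ?_ hs
        simp [Finset.coe_insert, Set.subset_insert]
      obtain ⟨a, ha, hmem⟩ := ih hs' (fun y hy => hc y (Finset.mem_insert_of_mem hy))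
      have hxS : x ∈ (W : Set V) ∪ Set.range z := hs (by simp)
      have hcx : 0 ≤ c x := hc x (Finset.mem_insert_self x s')
      rcases hxS with hxW | ⟨i, hi⟩
      · refine ⟨a, ha, ?_⟩
        rw [Finset.sum_insert hx]
        have : c x • x ∈ M := le_sup_left (α := Submodule ℚ V) (W.smul_mem _ hxW)
        have := M.add_mem this hmem
        convert this using 1
        abel
      · by_cases hii : i = i₀
        · refine ⟨a + c x, by positivity, ?_⟩
          rw [Finset.sum_insert hx]
          subst hii hi
          convert hmem using 1
          module
        · refine ⟨a, ha, ?_⟩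
          rw [Finset.sum_insert hx]
          have hxF : x ∈ F := by
            rw [hF]
            exact Finset.mem_image.2 ⟨i, Finset.mem_erase.2 ⟨hii, Finset.mem_univ i⟩, hi⟩
          have : c x • x ∈ M :=
            le_sup_right (α := Submodule ℚ V)
              ((Submodule.span ℚ (F : Set V)).smul_mem _ (Submodule.subset_span hxF))
          have := M.add_mem this hmem
          convert this using 1
          abel
  obtain ⟨a, ha, hmem⟩ := key s hs hc
  rw [← heq] at hmem
  have hz0M : z i₀ ∈ M := by
    have h1 : (-(1 + a)) • z i₀ ∈ M := by
      convert hmem using 1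
      module
    have h2 : ((-(1 + a))⁻¹ * (-(1 + a))) • z i₀ ∈ M := by
      rw [mul_smul]; exact M.smul_mem _ h1
    rwa [inv_mul_cancel₀ (by intro hcon; nlinarith [neg_eq_zero.mp hcon]), one_smul] at h2
  -- span ≤ M
  have hspan : Submodule.span ℚ ((W : Set V) ∪ Set.range z) ≤ M := by
    rw [Submodule.span_le]
    rintro x (hxW | ⟨i, rfl⟩)
    · exact le_sup_left (α := Submodule ℚ V) hxW
    · by_cases hii : i = i₀
      · subst hii; exact hz0M
      · exact le_sup_right (α := Submodule ℚ V)
          (Submodule.subset_span (Finset.mem_coe.2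
            (Finset.mem_image.2 ⟨i, Finset.mem_erase.2 ⟨hii, Finset.mem_univ i⟩, rfl⟩)))
  have h1 : Module.finrank ℚ (Submodule.span ℚ ((W : Set V) ∪ Set.range z)) ≤
      Module.finrank ℚ M := Submodule.finrank_mono hspan
  have h2 : Module.finrank ℚ M ≤ Module.finrank ℚ W +
      Module.finrank ℚ (Submodule.span ℚ (F : Set V)) := by
    rw [hM]
    have := Submodule.finrank_sup_add_finrank_inf_eq W (Submodule.span ℚ (F : Set V))
    omega
  have h3 : Module.finrank ℚ (Submodule.span ℚ (F : Set V)) ≤ t - 1 := by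
    refine le_trans (finrank_span_finset_le_card F) ?_
    calc F.card ≤ (Finset.univ.erase i₀).card := Finset.card_image_le
      _ = t - 1 := by rw [Finset.card_erase_of_mem (Finset.mem_univ i₀)]; simp
  omega
end

section
/- Let X be a positive basis of ℚⁿ and {X₁,…,X_s} a weak Reay partition of X, i.e., a partition such that for every i, the positive cone of X₁ ∪ ⋯ ∪ X_i is a linear subspace of ℚⁿ. Then s ≤ |X| − n. -/
lemma subset_posCone {V : Type*} [AddCommGroup V] [Module ℚ V] (S : Set V) : S ⊆ posCone S := by
  intro x hx
  exact ⟨{x}, fun _ => 1, by simpa, by intro _ _; norm_num, by simp⟩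

lemma posCone_subset_span {V : Type*} [AddCommGroup V] [Module ℚ V] (S : Set V) :
    posCone S ⊆ (Submodule.span ℚ S : Set V) := by
  rintro v ⟨t, c, hts, _, rfl⟩
  exact Submodule.sum_mem _ fun x hx =>
    Submodule.smul_mem _ _ (Submodule.subset_span (hts hx))

/-- If `X` is a positive basis of `ℚⁿ` and `{X₁, …, X_s}` is a weak Reay partition of `X`
(a partition such that for every `i` the positive cone of `X₁ ∪ ⋯ ∪ X_i` is a linear subspace),
then `s ≤ |X| - n`. -/
theorem weakReayPartition_card_le {n s : ℕ} (X : Finset (Fin n → ℚ))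
    (hpos : posCone (X : Set (Fin n → ℚ)) = Set.univ)
    (hmin : ∀ x ∈ X, posCone ((X : Set (Fin n → ℚ)) \ {x}) ≠ Set.univ)
    (Xp : Fin s → Finset (Fin n → ℚ))
    (hne : ∀ i, (Xp i).Nonempty)
    (hdisj : ∀ i j, i ≠ j → Disjoint (Xp i) (Xp j))
    (hcover : Finset.univ.biUnion Xp = X)
    (hreay : ∀ i : Fin s, ∃ U : Submodule ℚ (Fin n → ℚ),
      (U : Set (Fin n → ℚ)) = posCone (⋃ j ∈ {j : Fin s | j ≤ i}, (Xp j : Set (Fin n → ℚ)))) :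
    s ≤ X.card - n := by
  classical
  set P : ℕ → Finset (Fin n → ℚ) :=
    fun k => (Finset.univ.filter (fun j : Fin s => (j : ℕ) < k)).biUnion Xp with hP
  have key : ∀ k, k ≤ s →
      Module.finrank ℚ (Submodule.span ℚ ((P k : Set (Fin n → ℚ)))) + k ≤ (P k).card := by
    intro k hk
    induction k with
    | zero =>
      simp [hP]
    | succ k ih =>
      have hks : k < s := hk
      set i : Fin s := ⟨k, hks⟩ with hi
      obtain ⟨U, hU⟩ := hreay i
      have hPset : ((P (k+1) : Set (Fin n → ℚ)))
          = ⋃ j ∈ {j : Fin s | j ≤ i}, (Xp j : Set (Fin n → ℚ)) := by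
        ext v
        simp only [hP, Finset.coe_biUnion, Finset.coe_filter, Set.mem_iUnion, Set.mem_setOf_eq,
          Finset.mem_coe, Finset.mem_univ, true_and]
        constructor
        · rintro ⟨j, hj1, hj2⟩
          exact ⟨j, by simpa [hi, Fin.le_def] using Nat.lt_succ_iff.mp hj1, hj2⟩
        · rintro ⟨j, hj1, hj2⟩
          exact ⟨j, Nat.lt_succ_iff.mpr (by simpa [hi, Fin.le_def] using hj1), hj2⟩
      rw [← hPset] at hU
      have hPsplit : P (k+1) = P k ∪ Xp i := by
        ext v
        simp only [hP, Finset.mem_biUnion, Finset.mem_filter, Finset.mem_univ, true_and,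
          Finset.mem_union]
        constructor
        · rintro ⟨j, hj1, hj2⟩
          rcases Nat.lt_succ_iff_lt_or_eq.mp hj1 with h | h
          · exact Or.inl ⟨j, h, hj2⟩
          · exact Or.inr (by rwa [show j = i from Fin.ext h] at hj2)
        · rintro (⟨j, hj1, hj2⟩ | hv)
          · exact ⟨j, Nat.lt_succ_of_lt hj1, hj2⟩
          · exact ⟨i, Nat.lt_succ_self k, hv⟩
      have hPdisj : Disjoint (P k) (Xp i) := by
        rw [Finset.disjoint_left]
        intro a ha hai
        simp only [hP, Finset.mem_biUnion, Finset.mem_filter, Finset.mem_univ, true_and] at ha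
        obtain ⟨j, hj1, hj2⟩ := ha
        have hji : j ≠ i := by
          intro h; rw [h] at hj1; simp [hi] at hj1
        exact (Finset.disjoint_left.mp (hdisj j i hji)) hj2 hai
      have hspanU : Submodule.span ℚ ((P (k+1) : Set (Fin n → ℚ))) = U := by
        apply le_antisymm
        · rw [Submodule.span_le, hU]
          exact subset_posCone _
        · intro v hv
          exact posCone_subset_span _ (hU ▸ hv : v ∈ posCone ((P (k+1) : Set (Fin n → ℚ))))
      obtain ⟨y, hy⟩ := hne i
      set W : Submodule ℚ (Fin n → ℚ) := Submodule.span ℚ ((P k : Set (Fin n → ℚ))) with hW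
      set M : Submodule ℚ (Fin n → ℚ) :=
        W ⊔ Submodule.span ℚ (((Xp i).erase y : Set (Fin n → ℚ))) with hM
      have hWM : W ≤ M := le_sup_left
      have heM : Submodule.span ℚ (((Xp i).erase y : Set (Fin n → ℚ))) ≤ M := le_sup_right
      have hyU : y ∈ U := by
        rw [← hspanU]
        apply Submodule.subset_span
        simp [hPsplit, hy]
      have hnegy : -y ∈ posCone ((P (k+1) : Set (Fin n → ℚ))) := by
        rw [← hU]; exact U.neg_mem hyU
      obtain ⟨t, c, hts, hc, hrep⟩ := hnegy
      have htM : ∀ x ∈ t, x ≠ y → x ∈ M := by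
        intro x hx hxy
        have hx' := hts hx
        rw [hPsplit] at hx'
        simp only [Finset.coe_union, Set.mem_union, Finset.mem_coe] at hx'
        rcases hx' with h | h
        · exact hWM (Submodule.subset_span h)
        · exact heM (Submodule.subset_span (by simp [Finset.mem_erase, hxy, h]))
      have h0 : y + ∑ x ∈ t, c x • x = 0 := by rw [← hrep]; simp
      have hyM : y ∈ M := by
        by_cases hyt : y ∈ t
        · have hsum : ∑ x ∈ t.erase y, c x • x + c y • y = ∑ x ∈ t, c x • x :=
            Finset.sum_erase_add _ _ hyt
          have hsumM : ∑ x ∈ t.erase y, c x • x ∈ M :=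
            Submodule.sum_mem _ fun x hx => Submodule.smul_mem _ _
              (htM x (Finset.mem_of_mem_erase hx) (Finset.ne_of_mem_erase hx))
          have h2 : (1 + c y) • y + ∑ x ∈ t.erase y, c x • x = 0 := by
            rw [← hsum] at h0
            rw [add_smul, one_smul, add_assoc, add_comm (c y • y)]
            exact h0
          have h3 : (1 + c y) • y = -∑ x ∈ t.erase y, c x • x :=
            eq_neg_of_add_eq_zero_left h2
          have h4 : (1 + c y) • y ∈ M := h3 ▸ M.neg_mem hsumM
          have hc' : (1 + c y) ≠ 0 := by
            have := hc y hyt; positivity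
          have h5 : y = (1 + c y)⁻¹ • ((1 + c y) • y) := by
            rw [smul_smul, inv_mul_cancel₀ hc', one_smul]
          rw [h5]
          exact Submodule.smul_mem _ _ h4
        · have h3 : y = -∑ x ∈ t, c x • x := eq_neg_of_add_eq_zero_left h0
          have hsumM : ∑ x ∈ t, c x • x ∈ M :=
            Submodule.sum_mem _ fun x hx => Submodule.smul_mem _ _
              (htM x hx (by rintro rfl; exact hyt hx))
          rw [h3]
          exact M.neg_mem hsumM
      have hWM' : Submodule.span ℚ ((P (k+1) : Set (Fin n → ℚ))) ≤ M := by
        rw [Submodule.span_le]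
        intro x hx
        rw [hPsplit] at hx
        simp only [Finset.coe_union, Set.mem_union, Finset.mem_coe] at hx
        rcases hx with h | h
        · exact hWM (Submodule.subset_span h)
        · by_cases hxy : x = y
          · exact hxy ▸ hyM
          · exact heM (Submodule.subset_span (by simp [Finset.mem_erase, hxy, h]))
      have hr1 : Module.finrank ℚ (Submodule.span ℚ ((P (k+1) : Set (Fin n → ℚ))))
          ≤ Module.finrank ℚ M := Submodule.finrank_mono hWM'
      have hr2 : Module.finrank ℚ M ≤ Module.finrank ℚ W
          + Module.finrank ℚ (Submodule.span ℚ (((Xp i).erase y : Set (Fin n → ℚ)))) :=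
        Submodule.finrank_add_le_finrank_add_finrank _ _
      have hr3 : Module.finrank ℚ (Submodule.span ℚ (((Xp i).erase y : Set (Fin n → ℚ))))
          ≤ ((Xp i).erase y).card := finrank_span_finset_le_card _
      have hcard : (P (k+1)).card = (P k).card + (Xp i).card := by
        rw [hPsplit, Finset.card_union_of_disjoint hPdisj]
      have hYpos : 1 ≤ (Xp i).card := Finset.card_pos.mpr ⟨y, hy⟩
      have herase : ((Xp i).erase y).card = (Xp i).card - 1 := Finset.card_erase_of_mem hy
      have ihk := ih (le_of_lt hks)
      omega
  have hPs : P s = X := by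
    rw [← hcover]
    show (Finset.univ.filter fun j : Fin s => (j : ℕ) < s).biUnion Xp = _
    rw [Finset.filter_true_of_mem fun j _ => j.isLt]
  have hspan : Submodule.span ℚ (X : Set (Fin n → ℚ)) = ⊤ := by
    rw [eq_top_iff]
    intro v _
    exact posCone_subset_span _ (by rw [hpos]; trivial)
  have hfin := key s le_rfl
  rw [hPs, hspan, finrank_top, Module.finrank_fin_fun] at hfin
  omega
end
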